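/- Let G⃗ = (V, E, w) and G⃗' = (V, E, w') be weighted directed graphs on the same finite edge set E ⊆ V × V, with common edge–vertex transfer matrix B = H − T, directed Laplacians L⃗_G = Bᵀ W H and L⃗_{G'} = Bᵀ W' H (W = diag(w), W' = diag(w')), and undirected Laplacian L_G = Bᵀ W B. Suppose the corresponding undirected graph und(G⃗) (with weights w) is connected, and suppose Bᵀ w = Bᵀ w'. Then ker(L⃗_G − L⃗_{G'}) ⊇ ker(L_G) and ker((L⃗_G − L⃗_{G'})ᵀ) ⊇ ker(L_Gᵀ). -/

import Mathlib

open Matrix BigOperators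

noncomputable section

/-- The 0/1 indicator matrix of a map from (edge) indices to vertices:
row `e` is the indicator of the vertex `f e`. -/
def indMat {E V : Type*} [DecidableEq V] (f : E → V) : Matrix E V ℝ :=
  Matrix.of fun e v => if f e = v then (1 : ℝ) else 0

/-- The edge–vertex transfer matrix `B = H - T` of a directed graph with head map `hd`
and tail map `tl`. -/
def transMat {E V : Type*} [DecidableEq V] (hd tl : E → V) : Matrix E V ℝ :=
  indMat hd - indMat tl

/-- The directed Laplacian `Bᵀ W H`. -/
def dirLap {E V : Type*} [Fintype E] [DecidableEq E] [DecidableEq V]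
    (hd tl : E → V) (w : E → ℝ) : Matrix V V ℝ :=
  (transMat hd tl)ᵀ * Matrix.diagonal w * indMat hd

/-- The undirected Laplacian `Bᵀ W B` of the corresponding undirected graph. -/
def undLap {E V : Type*} [Fintype E] [DecidableEq E] [DecidableEq V]
    (hd tl : E → V) (w : E → ℝ) : Matrix V V ℝ :=
  (transMat hd tl)ᵀ * Matrix.diagonal w * transMat hd tl

/-- The corresponding undirected (simple) graph of a weighted directed graph:
`u ~ v` iff `u ≠ v` and some edge of positive weight joins them (in either direction). -/
def undSG {E V : Type*} (hd tl : E → V) (w : E → ℝ) : SimpleGraph V :=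
  SimpleGraph.fromRel (fun u v => ∃ e, 0 < w e ∧ hd e = u ∧ tl e = v)

/-- Directed Laplacian for a graph whose edges are indexed by pairs of vertices. -/
def dirLapP {V : Type*} [Fintype V] [DecidableEq V] (w : V × V → ℝ) : Matrix V V ℝ :=
  dirLap Prod.fst Prod.snd w

/-- Undirected Laplacian for a graph whose edges are indexed by pairs of vertices. -/
def undLapP {V : Type*} [Fintype V] [DecidableEq V] (w : V × V → ℝ) : Matrix V V ℝ :=
  undLap Prod.fst Prod.snd w

/-- Corresponding undirected graph for edges indexed by pairs of vertices. -/
def undSGP {V : Type*} (w : V × V → ℝ) : SimpleGraph V :=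
  undSG Prod.fst Prod.snd w

/-- `B` is a Moore–Penrose pseudoinverse of `A`. -/
def IsMPInv {V : Type*} [Fintype V] (A B : Matrix V V ℝ) : Prop :=
  A * B * A = A ∧ B * A * B = B ∧ (A * B)ᵀ = A * B ∧ (B * A)ᵀ = B * A

open Classical in
/-- The Moore–Penrose pseudoinverse of a (square, real) matrix. -/
noncomputable def mpinv {V : Type*} [Fintype V] (A : Matrix V V ℝ) : Matrix V V ℝ :=
  if h : ∃ B, IsMPInv A B then h.choose else 0

open Classical in
/-- The PSD square root of a positive semidefinite matrix (junk value `0` otherwise). -/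
noncomputable def psdSqrt {V : Type*} [Fintype V] [DecidableEq V] (A : Matrix V V ℝ) :
    Matrix V V ℝ :=
  if h : A.PosSemidef then
    (h.1.eigenvectorUnitary : Matrix V V ℝ) *
      Matrix.diagonal ((RCLike.ofReal : ℝ → ℝ) ∘ Real.sqrt ∘ h.1.eigenvalues) *
      (star h.1.eigenvectorUnitary : Matrix V V ℝ)
  else 0

/-- `A^{†/2} = (A†)^{1/2} = (A^{1/2})†` for a PSD matrix `A`. -/
noncomputable def pinvSqrt {V : Type*} [Fintype V] [DecidableEq V] (A : Matrix V V ℝ) :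
    Matrix V V ℝ :=
  mpinv (psdSqrt A)

/-- The ℓ₂→ℓ₂ (spectral) operator norm of `A` is at most `c`. -/
def l2OpNormLE {m n : Type*} [Fintype m] [Fintype n] (A : Matrix m n ℝ) (c : ℝ) : Prop :=
  ∀ (x : m → ℝ) (y : n → ℝ),
    |x ⬝ᵥ A.mulVec y| ≤ c * Real.sqrt (∑ i, x i ^ 2) * Real.sqrt (∑ j, y j ^ 2)

/-- `|xᵀ A y| ≤ ε √((xᵀ L x)(yᵀ L y))` for all vectors `x, y`. -/
def bilinApprox {V : Type*} [Fintype V] (A L : Matrix V V ℝ) (ε : ℝ) : Prop :=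
  ∀ x y : V → ℝ,
    |x ⬝ᵥ A.mulVec y| ≤ ε * Real.sqrt ((x ⬝ᵥ L.mulVec x) * (y ⬝ᵥ L.mulVec y))

/-- Schur complement of a `(V ⊕ X) × (V ⊕ X)` matrix onto the `V`-block. -/
def schurInl {V X : Type*} [Fintype V] [Fintype X] (A : Matrix (V ⊕ X) (V ⊕ X) ℝ) :
    Matrix V V ℝ :=
  A.submatrix Sum.inl Sum.inl -
    A.submatrix Sum.inl Sum.inr * mpinv (A.submatrix Sum.inr Sum.inr) *
      A.submatrix Sum.inr Sum.inl


lemma indMat_mulVec {E V : Type*} [Fintype V] [DecidableEq V] (f : E → V) (x : V → ℝ) :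
    (indMat f).mulVec x = fun e => x (f e) := by
  funext e
  simp [indMat, Matrix.mulVec, dotProduct, ite_mul]

lemma transMat_mulVec {E V : Type*} [Fintype V] [DecidableEq V] (hd tl : E → V) (x : V → ℝ) :
    (transMat hd tl).mulVec x = fun e => x (hd e) - x (tl e) := by
  funext e
  simp [transMat, Matrix.sub_mulVec, indMat_mulVec]

lemma undLap_transpose {E V : Type*} [Fintype E] [DecidableEq E] [Fintype V] [DecidableEq V]
    (hd tl : E → V) (w : E → ℝ) : (undLap hd tl w)ᵀ = undLap hd tl w := by
  simp [undLap, Matrix.transpose_mul, Matrix.mul_assoc]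

/-- A vector in the kernel of the undirected Laplacian of a connected graph is constant. -/
lemma ker_undLap_const {V : Type*} [Fintype V] [DecidableEq V]
    (w : V × V → ℝ) (hw : ∀ e, 0 ≤ w e) (hconn : (undSGP w).Connected)
    (x : V → ℝ) (hx : (undLapP w).mulVec x = 0) : ∀ u v : V, x u = x v := by
  classical
  set B := transMat (Prod.fst : V × V → V) Prod.snd with hBdef
  -- quadratic form is zero
  have hquad : ∑ e : V × V, w e * (x e.1 - x e.2) ^ 2 = 0 := by
    have h0 : x ⬝ᵥ (undLapP w).mulVec x = 0 := by rw [hx]; simp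
    rw [show (undLapP w) = Bᵀ * (Matrix.diagonal w * B) by
      simp [undLapP, undLap, hBdef, Matrix.mul_assoc]] at h0
    rw [← Matrix.mulVec_mulVec, Matrix.dotProduct_mulVec, Matrix.vecMul_transpose] at h0
    rw [← Matrix.mulVec_mulVec] at h0
    rw [transMat_mulVec] at h0
    simpa [dotProduct, Matrix.mulVec_diagonal, mul_comm, mul_assoc, sq,
      mul_left_comm] using h0
  have hterm : ∀ e : V × V, 0 < w e → x e.1 = x e.2 := by
    intro e hwe
    have hnn : ∀ e ∈ Finset.univ, 0 ≤ w e * (x e.1 - x e.2) ^ 2 := fun e _ =>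
      mul_nonneg (hw e) (sq_nonneg _)
    have := (Finset.sum_eq_zero_iff_of_nonneg hnn).mp hquad e (Finset.mem_univ e)
    have h2 : (x e.1 - x e.2) ^ 2 = 0 := by
      rcases mul_eq_zero.mp this with h | h
      · exact absurd h (ne_of_gt hwe)
      · exact h
    have := pow_eq_zero_iff (n := 2) (by norm_num) |>.mp h2
    linarith [sub_eq_zero.mp this]
  -- adjacency implies equal values
  have hadj : ∀ u v : V, (undSGP w).Adj u v → x u = x v := by
    intro u v huv
    rcases huv with ⟨hne, h | h⟩ <;> rcases h with ⟨e, hpos, h1, h2⟩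
    · rw [← h1, ← h2]; exact hterm e hpos
    · rw [← h1, ← h2]; exact (hterm e hpos).symm
  intro u v
  obtain ⟨p⟩ := hconn u v
  induction p with
  | nil => rfl
  | cons h p ih => exact (hadj _ _ h).trans ih

/-- kernels of the difference of directed Laplacians contain
the kernels of the undirected Laplacian, under degree-balance preservation. -/
theorem stmt_0 {V : Type*} [Fintype V] [DecidableEq V]
    (w w' : V × V → ℝ) (hw : ∀ e, 0 ≤ w e) (hw' : ∀ e, 0 ≤ w' e)
    (hconn : (undSGP w).Connected)
    (hbal : (transMat (Prod.fst : V × V → V) Prod.snd)ᵀ.mulVec w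
          = (transMat (Prod.fst : V × V → V) Prod.snd)ᵀ.mulVec w') :
    (∀ x : V → ℝ, (undLapP w).mulVec x = 0 →
        (dirLapP w - dirLapP w').mulVec x = 0) ∧
    (∀ x : V → ℝ, ((undLapP w)ᵀ).mulVec x = 0 →
        ((dirLapP w - dirLapP w')ᵀ).mulVec x = 0) := by
  classical
  set B := transMat (Prod.fst : V × V → V) Prod.snd with hBdef
  constructor
  · intro x hx
    obtain ⟨u₀⟩ := hconn.nonempty
    have hc : ∀ v, x v = x u₀ := fun v => ker_undLap_const w hw hconn x hx v u₀
    have hH : (indMat (Prod.fst : V × V → V)).mulVec x = fun _ => x u₀ := by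
      rw [indMat_mulVec]; funext e; exact hc e.1
    have : (dirLapP w - dirLapP w').mulVec x
        = Bᵀ.mulVec (x u₀ • (w - w')) := by
      rw [Matrix.sub_mulVec]
      rw [show dirLapP w = Bᵀ * (Matrix.diagonal w * (indMat Prod.fst : Matrix (V × V) V ℝ)) by
        simp [dirLapP, dirLap, hBdef, Matrix.mul_assoc]]
      rw [show dirLapP w' = Bᵀ * (Matrix.diagonal w' * (indMat Prod.fst : Matrix (V × V) V ℝ)) by
        simp [dirLapP, dirLap, hBdef, Matrix.mul_assoc]]
      rw [← Matrix.mulVec_mulVec, ← Matrix.mulVec_mulVec,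
        ← Matrix.mulVec_mulVec, ← Matrix.mulVec_mulVec, hH,
        ← Matrix.mulVec_sub]
      congr 1
      funext e
      simp only [Matrix.mulVec_diagonal, Matrix.mulVec, dotProduct, Matrix.diagonal_apply,
        Pi.sub_apply, Pi.smul_apply, smul_eq_mul, Finset.sum_ite_eq, Finset.mem_univ, if_true,
        ite_mul, zero_mul]
      ring
    rw [this, Matrix.mulVec_smul, Matrix.mulVec_sub, hbal]
    simp
  · intro x hx
    rw [show (undLapP w)ᵀ = undLapP w from undLap_transpose _ _ _] at hx
    have hc : ∀ u v, x u = x v := ker_undLap_const w hw hconn x hx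
    have hBx : B.mulVec x = 0 := by
      rw [hBdef, transMat_mulVec]
      funext e
      simp [hc e.1 e.2]
    have h1 : (dirLapP w)ᵀ.mulVec x = 0 := by
      rw [show (dirLapP w)ᵀ = ((indMat Prod.fst)ᵀ : Matrix V (V × V) ℝ) * (Matrix.diagonal w)ᵀ * B by
        simp [dirLapP, dirLap, hBdef, Matrix.transpose_mul, Matrix.mul_assoc]]
      rw [Matrix.mul_assoc, ← Matrix.mulVec_mulVec, ← Matrix.mulVec_mulVec, hBx]
      simp
    have h1' : (dirLapP w')ᵀ.mulVec x = 0 := by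
      rw [show (dirLapP w')ᵀ = ((indMat Prod.fst)ᵀ : Matrix V (V × V) ℝ) * (Matrix.diagonal w')ᵀ * B by
        simp [dirLapP, dirLap, hBdef, Matrix.transpose_mul, Matrix.mul_assoc]]
      rw [Matrix.mul_assoc, ← Matrix.mulVec_mulVec, ← Matrix.mulVec_mulVec, hBx]
      simp
    rw [Matrix.transpose_sub, Matrix.sub_mulVec, h1, h1']
    simp


end
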